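/- arXiv:1811.02393 — 8 statements merged into one kernel-verified Lean document; each statement's English description precedes it below -/
import Mathlib

section
/- Let A be a topological algebra (a topological vector space with separately continuous multiplication) possessing a left approximate identity, and let J be a dense right ideal of A. Then J intersects every closed left ideal I of A densely, i.e. the closure of J ∩ I equals I. -/
open Filter Topology Set

theorem mem_closure_of_tendsto_mul_of_dense {M ι : Type*} [Mul M] [TopologicalSpace M]
    {l : Filter ι} [l.NeBot] {e : ι → M} {J S : Set M} {x : M}
    (hx : Continuous (· * x)) (he : Tendsto (fun i => e i * x) l (𝓝 x))
    (hJ : Dense J) (hJS : ∀ j ∈ J, j * x ∈ S) : x ∈ closure S :=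
  have mul_mem_closure : ∀ a, a * x ∈ closure S := fun a =>
    map_mem_closure (f := (· * x)) hx (hJ a) hJS
  isClosed_closure.mem_of_tendsto he (Eventually.of_forall fun i => mul_mem_closure (e i))

theorem dense_right_ideal_inter_closed_left_ideal_general
    {A : Type*} [NonUnitalRing A] [Module ℂ A]
    [TopologicalSpace A]
    (hmul : ∀ a : A, Continuous (fun x => a * x) ∧ Continuous (fun x => x * a))
    (lai : ∃ (ι : Type) (l : Filter ι) (e : ι → A), l.NeBot ∧
      ∀ a : A, Filter.Tendsto (fun i => e i * a) l (nhds a))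
    (J : Submodule ℂ A) (hJr : ∀ x ∈ J, ∀ a : A, x * a ∈ J)
    (hJdense : Dense (J : Set A))
    (I : Submodule ℂ A) (hIl : ∀ a : A, ∀ x ∈ I, a * x ∈ I)
    (hIclosed : IsClosed (I : Set A)) :
    closure ((J : Set A) ∩ (I : Set A)) = (I : Set A) := by
  obtain ⟨ι, l, e, hl, he⟩ := lai
  refine (closure_minimal inter_subset_right hIclosed).antisymm fun x hx => ?_
  exact mem_closure_of_tendsto_mul_of_dense (hmul x).2 (he x) hJdense
    fun j hj => ⟨hJr j hj x, hIl j x hx⟩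

/-- In a semi-topological algebra (a topological vector space with separately
continuous multiplication) with a left approximate identity, every dense right ideal `J`
intersects every closed left ideal `I` densely. -/
theorem dense_right_ideal_inter_closed_left_ideal
    {A : Type*} [NonUnitalRing A] [Module ℂ A] [IsScalarTower ℂ A A] [SMulCommClass ℂ A A]
    [TopologicalSpace A] [IsTopologicalAddGroup A] [ContinuousSMul ℂ A]
    (hmul : ∀ a : A, Continuous (fun x => a * x) ∧ Continuous (fun x => x * a))
    (lai : ∃ (ι : Type) (l : Filter ι) (e : ι → A), l.NeBot ∧
      ∀ a : A, Filter.Tendsto (fun i => e i * a) l (nhds a))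
    (J : Submodule ℂ A) (hJr : ∀ x ∈ J, ∀ a : A, x * a ∈ J)
    (hJdense : Dense (J : Set A))
    (I : Submodule ℂ A) (hIl : ∀ a : A, ∀ x ∈ I, a * x ∈ I)
    (hIclosed : IsClosed (I : Set A)) :
    closure ((J : Set A) ∩ (I : Set A)) = (I : Set A) :=
  dense_right_ideal_inter_closed_left_ideal_general hmul lai J hJr hJdense I hIl hIclosed
end

section
/- Let A be a semi-topological algebra and I a closed two-sided ideal of A. If A is topologically left Noetherian, then so is the quotient algebra A/I. -/
/-!
Pull a closed left ideal `J` of `B` back along the continuous surjection `φ`: the preimage is a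
closed left ideal of `A`, hence the closure of `A♯x₁ + ⋯ + A♯xₙ`. Since `φ` is surjective it maps
this preimage onto `J` and `A♯xᵢ` onto `B♯φ(xᵢ)`, and by continuity it maps closures into
closures, so `J` is the closure of `B♯φ(x₁) + ⋯ + B♯φ(xₙ)`.
-/

/-- A closed left ideal of a (semi-)topological algebra is topologically finitely generated if it
is the closure of `A♯x₁ + ⋯ + A♯xₙ` for finitely many of its elements, where `A♯x` denotes the
set of elements `a * x + s • x` with `a ∈ A`, `s ∈ ℂ`. -/
def IsTopLeftNoetherian (A : Type*) [NonUnitalRing A] [Module ℂ A] [TopologicalSpace A] : Prop :=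
  ∀ I : Submodule ℂ A, (∀ a : A, ∀ x ∈ I, a * x ∈ I) → IsClosed (I : Set A) →
    ∃ (n : ℕ) (x : Fin n → A), (∀ i, x i ∈ I) ∧
      (I : Set A) = closure {y | ∃ (a : Fin n → A) (s : Fin n → ℂ),
        y = ∑ i, (a i * x i + s i • x i)}

open Set

section LeftCombinations

variable {R A B : Type*} [Semiring R] [NonUnitalSemiring A] [Module R A]
  [NonUnitalSemiring B] [Module R B]

variable (R) in
/-- The set `A♯x₁ + ⋯ + A♯xₙ` appearing in `IsTopLeftNoetherian`. -/
def leftCombinations {n : ℕ} (x : Fin n → A) : Set A :=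
  {y | ∃ (a : Fin n → A) (s : Fin n → R), y = ∑ i, (a i * x i + s i • x i)}

theorem leftCombinations_subset {n : ℕ} {x : Fin n → A} (J : Submodule R A)
    (hJ : ∀ a : A, ∀ y ∈ J, a * y ∈ J) (hx : ∀ i, x i ∈ J) :
    leftCombinations R x ⊆ J := by
  rintro y ⟨a, s, rfl⟩
  exact J.sum_mem fun i _ => J.add_mem (hJ (a i) _ (hx i)) (J.smul_mem _ (hx i))

theorem image_leftCombinations (φ : A →ₙₐ[R] B) (hφ : Function.Surjective φ) {n : ℕ}
    (x : Fin n → A) : φ '' leftCombinations R x = leftCombinations R (φ ∘ x) := by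
  ext y
  constructor
  · rintro ⟨_, ⟨a, s, rfl⟩, rfl⟩
    exact ⟨φ ∘ a, s, by simp [map_sum]⟩
  · rintro ⟨b, s, rfl⟩
    choose a ha using fun i => hφ (b i)
    exact ⟨_, ⟨a, s, rfl⟩, by simp [map_sum, ha]⟩

end LeftCombinations

theorem IsTopLeftNoetherian.of_surjective {A B : Type*}
    [NonUnitalRing A] [Module ℂ A] [TopologicalSpace A]
    [NonUnitalRing B] [Module ℂ B] [TopologicalSpace B]
    (hA : IsTopLeftNoetherian A) (φ : A →ₙₐ[ℂ] B) (hφ : Continuous φ)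
    (hsurj : Function.Surjective φ) : IsTopLeftNoetherian B := by
  intro J hJleft hJclosed
  obtain ⟨n, x, hxL, hL⟩ := hA (J.comap (φ : A →ₗ[ℂ] B))
    (fun a y hy => by simpa using hJleft (φ a) _ hy) (hJclosed.preimage hφ)
  have hxJ : ∀ i, φ (x i) ∈ J := hxL
  refine ⟨n, φ ∘ x, hxJ, Subset.antisymm ?_ ?_⟩
  · calc (J : Set B) = φ '' (φ ⁻¹' J) := (image_preimage_eq _ hsurj).symm
      _ = φ '' closure (leftCombinations ℂ x) := congrArg (φ '' ·) hL
      _ ⊆ closure (φ '' leftCombinations ℂ x) := image_closure_subset_closure_image hφ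
      _ = closure (leftCombinations ℂ (φ ∘ x)) := by rw [image_leftCombinations φ hsurj]
  · exact hJclosed.closure_subset_iff.mpr (leftCombinations_subset J hJleft hxJ)

theorem isTopLeftNoetherian_quotient_general
    {A B : Type*}
    [NonUnitalRing A] [Module ℂ A]
    [TopologicalSpace A]
    [NonUnitalRing B] [Module ℂ B]
    [TopologicalSpace B]
    (φ : A →ₙₐ[ℂ] B) (hsurj : Function.Surjective φ) (hquot : Topology.IsQuotientMap ⇑φ)
    (hA : IsTopLeftNoetherian A) :
    IsTopLeftNoetherian B :=
  hA.of_surjective φ hquot.continuous hsurj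

/-- If a semi-topological algebra `A` is topologically left Noetherian, then so is
any quotient `A ⧸ I` by a closed two-sided ideal `I`; the quotient is represented by a surjective
topological quotient map `φ : A →ₙₐ[ℂ] B` whose kernel is `I`. -/
theorem isTopLeftNoetherian_quotient
    {A B : Type*}
    [NonUnitalRing A] [Module ℂ A] [IsScalarTower ℂ A A] [SMulCommClass ℂ A A]
    [TopologicalSpace A] [IsTopologicalAddGroup A] [ContinuousSMul ℂ A]
    [NonUnitalRing B] [Module ℂ B] [IsScalarTower ℂ B B] [SMulCommClass ℂ B B]
    [TopologicalSpace B] [IsTopologicalAddGroup B] [ContinuousSMul ℂ B]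
    (hmulA : ∀ a : A, Continuous (fun x => a * x) ∧ Continuous (fun x => x * a))
    (hmulB : ∀ b : B, Continuous (fun x => b * x) ∧ Continuous (fun x => x * b))
    (I : Submodule ℂ A)
    (hIleft : ∀ a : A, ∀ x ∈ I, a * x ∈ I) (hIright : ∀ x ∈ I, ∀ a : A, x * a ∈ I)
    (hIclosed : IsClosed (I : Set A))
    (φ : A →ₙₐ[ℂ] B) (hsurj : Function.Surjective φ) (hquot : Topology.IsQuotientMap ⇑φ)
    (hker : φ ⁻¹' {0} = (I : Set A))
    (hA : IsTopLeftNoetherian A) :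
    IsTopLeftNoetherian B :=
  isTopLeftNoetherian_quotient_general φ hsurj hquot hA
end

section
/- A semi-topological algebra A is topologically left Noetherian if and only if its unitisation A♯ is topologically left Noetherian. -/
/-- The product topology on the unitisation `A♯ = ℂ ⊕ A`, transported along the canonical
additive equivalence `Unitization ℂ A ≃+ ℂ × A`. -/
noncomputable def unitizationTopology (A : Type*) [NonUnitalRing A] [Module ℂ A]
    [TopologicalSpace A] : TopologicalSpace (Unitization ℂ A) :=
  TopologicalSpace.induced (Unitization.addEquiv ℂ A) inferInstance

open Topology Unitization

section LeftSpan

variable (R : Type*) {B : Type*} [CommRing R] [NonUnitalRing B] [Module R B] {n : ℕ}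

/-- The set `B♯x₁ + ⋯ + B♯xₙ` of the definition of `IsTopLeftNoetherian`. -/
def leftSpan (x : Fin n → B) : Set B :=
  {y | ∃ (a : Fin n → B) (s : Fin n → R), y = ∑ i, (a i * x i + s i • x i)}

variable {R}

lemma leftSpan_subset {J : Submodule R B} (hJ : ∀ a : B, ∀ z ∈ J, a * z ∈ J) {x : Fin n → B}
    (hx : ∀ i, x i ∈ J) : leftSpan R x ⊆ J := by
  rintro y ⟨a, s, rfl⟩
  exact J.sum_mem fun i _ => J.add_mem (hJ _ _ (hx i)) (J.smul_mem _ (hx i))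

lemma smul_add_mem_leftSpan_cons (u : B) (t : R) {x : Fin n → B} {y : B}
    (hy : y ∈ leftSpan R x) : t • u + y ∈ leftSpan R (Fin.cons u x : Fin (n + 1) → B) := by
  obtain ⟨a, s, rfl⟩ := hy
  refine ⟨Fin.cons 0 a, Fin.cons t s, ?_⟩
  simp [Fin.sum_univ_succ]

lemma smul_add_mem_closure_leftSpan_cons [TopologicalSpace B] [ContinuousAdd B] (u : B) (t : R)
    {x : Fin n → B} {y : B} (hy : y ∈ closure (leftSpan R x)) :
    t • u + y ∈ closure (leftSpan R (Fin.cons u x : Fin (n + 1) → B)) :=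
  map_mem_closure (continuous_const_add (t • u)) hy fun _ ↦ smul_add_mem_leftSpan_cons u t

end LeftSpan

section UnitizationAlgebra

variable {R A : Type*} [CommRing R] [NonUnitalRing A] [Module R A]

lemma Unitization.inr_sum {ι : Type*} (s : Finset ι) (f : ι → A) :
    ((∑ i ∈ s, f i : A) : Unitization R A) = ∑ i ∈ s, (f i : Unitization R A) :=
  map_sum (inrHom R R A) f s

lemma Unitization.mul_inr_add_smul_inr (c : Unitization R A) (s : R) (b : A) :
    c * (b : Unitization R A) + s • (b : Unitization R A) = ↑(c.snd * b + (c.fst + s) • b) := by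
  refine Unitization.ext (by simp) ?_
  simp only [snd_add, snd_mul, snd_smul, snd_inr, fst_inr, zero_smul, add_smul]
  abel

lemma Unitization.image_inr_leftSpan [IsScalarTower R A A] [SMulCommClass R A A] {n : ℕ}
    (x : Fin n → A) :
    (inr : A → Unitization R A) '' leftSpan R x = leftSpan R fun i ↦ (x i : Unitization R A) := by
  ext z
  constructor
  · rintro ⟨_, ⟨a, s, rfl⟩, rfl⟩
    refine ⟨fun i ↦ a i, s, ?_⟩
    simp only [inr_sum, inr_add, inr_mul, inr_smul]
  · rintro ⟨a, s, rfl⟩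
    refine ⟨_, ⟨fun i ↦ (a i).snd, fun i ↦ (a i).fst + s i, rfl⟩, ?_⟩
    simp only [inr_sum, mul_inr_add_smul_inr]

end UnitizationAlgebra

lemma Unitization.exists_mem_forall_eq_fst_smul_add_inr {𝕜 A : Type*} [Field 𝕜] [AddCommGroup A]
    [Module 𝕜 A] (J : Submodule 𝕜 (Unitization 𝕜 A)) :
    ∃ u ∈ J, ∀ z ∈ J, ∃ c : A, z = z.fst • u + c := by
  by_cases h : ∃ w ∈ J, w.fst ≠ 0
  · obtain ⟨w, hw, hw0⟩ := h
    refine ⟨w.fst⁻¹ • w, J.smul_mem _ hw, fun z _ ↦ ⟨(z.snd - z.fst • w.fst⁻¹ • w.snd : A), ?_⟩⟩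
    refine Unitization.ext ?_ ?_
    · simp [sub_eq_add_neg, hw0]
    · simp [sub_eq_add_neg]
  · push Not at h
    refine ⟨0, J.zero_mem, fun z hz ↦ ⟨z.snd, ?_⟩⟩
    refine Unitization.ext ?_ ?_
    · simp [h z hz]
    · simp

section UnitizationTopology

attribute [local instance] unitizationTopology

variable {A : Type*} [NonUnitalRing A] [Module ℂ A] [TopologicalSpace A]

lemma Unitization.isClosedEmbedding_inr : IsClosedEmbedding (inr : A → Unitization ℂ A) :=
  ((addEquiv ℂ A).toEquiv.toHomeomorphOfIsInducing ⟨rfl⟩).symm.isClosedEmbedding.comp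
    (.of_isEmbedding_isClosedMap (isEmbedding_prodMkRight (0 : ℂ)) (isClosedMap_prodMk_left 0))

lemma Unitization.continuousAdd [ContinuousAdd A] : ContinuousAdd (Unitization ℂ A) :=
  Topology.IsInducing.continuousAdd (addEquiv ℂ A) ⟨rfl⟩

variable [IsScalarTower ℂ A A] [SMulCommClass ℂ A A]

theorem IsTopLeftNoetherian.of_unitization (h : IsTopLeftNoetherian (Unitization ℂ A)) :
    IsTopLeftNoetherian A := by
  intro I hI hIc
  set J := I.map (inrHom ℂ ℂ A)
  have hJ_coe : (J : Set (Unitization ℂ A)) = inr '' I := Submodule.map_coe ..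
  have hJ : ∀ z : Unitization ℂ A, ∀ y ∈ J, z * y ∈ J := by
    rintro z _ ⟨b, hb, rfl⟩
    refine ⟨z.snd * b + z.fst • b, I.add_mem (hI _ _ hb) (I.smul_mem _ hb), ?_⟩
    simpa using (mul_inr_add_smul_inr z 0 b).symm
  obtain ⟨n, g, hgJ, hJg⟩ := h J hJ (hJ_coe ▸ isClosedEmbedding_inr.isClosedMap _ hIc)
  choose b hbI hbg using hgJ
  have hg : g = fun i ↦ (b i : Unitization ℂ A) := funext fun i ↦ (hbg i).symm
  refine ⟨n, b, hbI, (inr_injective (R := ℂ)).image_injective ?_⟩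
  calc inr '' I = closure (leftSpan ℂ g) := hJ_coe ▸ hJg
    _ = closure (inr '' leftSpan ℂ b) := by rw [image_inr_leftSpan, hg]
    _ = inr '' closure (leftSpan ℂ b) := isClosedEmbedding_inr.closure_image_eq _

theorem IsTopLeftNoetherian.unitization [ContinuousAdd A] (h : IsTopLeftNoetherian A) :
    IsTopLeftNoetherian (Unitization ℂ A) := by
  have := Unitization.continuousAdd (A := A)
  intro J hJ hJc
  set I := J.comap (inrHom ℂ ℂ A)
  have hI : ∀ a : A, ∀ b ∈ I, a * b ∈ I := fun a b hb ↦ by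
    simpa [I] using hJ a _ hb
  obtain ⟨n, x, hxI, hIx : (I : Set A) = closure (leftSpan ℂ x)⟩ :=
    h I hI (hJc.preimage isClosedEmbedding_inr.continuous)
  obtain ⟨u, huJ, hu⟩ := exists_mem_forall_eq_fst_smul_add_inr J
  have hgen : ∀ i, (Fin.cons u fun i ↦ (x i : Unitization ℂ A) : Fin (n + 1) → _) i ∈ J :=
    Fin.cases huJ hxI
  refine ⟨n + 1, _, hgen, subset_antisymm ?_ (closure_minimal (leftSpan_subset hJ hgen) hJc)⟩
  intro z hz
  obtain ⟨c, hzc⟩ := hu z hz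
  have hc : c ∈ closure (leftSpan ℂ x) := by
    rw [← hIx]
    show (c : Unitization ℂ A) ∈ J
    rw [eq_sub_of_add_eq' hzc.symm]
    exact J.sub_mem hz (J.smul_mem _ huJ)
  rw [hzc]
  apply smul_add_mem_closure_leftSpan_cons
  rw [← image_inr_leftSpan, isClosedEmbedding_inr.closure_image_eq]
  exact Set.mem_image_of_mem _ hc

end UnitizationTopology

theorem isTopLeftNoetherian_iff_unitization_general
    {A : Type*} [NonUnitalRing A] [Module ℂ A] [IsScalarTower ℂ A A] [SMulCommClass ℂ A A]
    [TopologicalSpace A] [IsTopologicalAddGroup A] :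
    IsTopLeftNoetherian A ↔
      @IsTopLeftNoetherian (Unitization ℂ A) _ _ (unitizationTopology A) :=
  ⟨.unitization, .of_unitization⟩

/-- A semi-topological algebra `A` is topologically left Noetherian if and only
if its unitisation `A♯` is topologically left Noetherian. -/
theorem isTopLeftNoetherian_iff_unitization
    {A : Type*} [NonUnitalRing A] [Module ℂ A] [IsScalarTower ℂ A A] [SMulCommClass ℂ A A]
    [TopologicalSpace A] [IsTopologicalAddGroup A] [ContinuousSMul ℂ A]
    (hmul : ∀ a : A, Continuous (fun x => a * x) ∧ Continuous (fun x => x * a)) :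
    IsTopLeftNoetherian A ↔
      @IsTopLeftNoetherian (Unitization ℂ A) _ _ (unitizationTopology A) :=
  isTopLeftNoetherian_iff_unitization_general
end

section
/- Let G be a countable discrete group with the property that f lies in the closure of A(G)·f for all f in the Fourier algebra A(G). Then A(G) is topologically Noetherian: every closed ideal of A(G) is topologically principal (generated topologically by a single element). -/
/-- An abstract model of the Fourier algebra `A(G)` of a discrete group `G`: a commutative Banach
algebra of functions on `G` (contained in `c₀(G)`, with evaluations of norm at most `‖·‖`),
containing the point masses `δ_x` (which have norm one), and such that, under the hypothesis
`f ∈ closure (A(G)·f)` for all `f`, its closed ideals are exactly the sets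
`I(E) = {f : f|_E = 0}` (Kaniuth–Lau). -/
structure FourierAlgebraModel (G : Type*) [Group G] where
  carrier : Type*
  [nring : NormedCommRing carrier]
  [nalg : NormedAlgebra ℂ carrier]
  [complete : CompleteSpace carrier]
  coeFn : carrier →ₐ[ℂ] (G → ℂ)
  inj : Function.Injective coeFn
  /-- `A(G) ⊆ c₀(G)`. -/
  zeroAtInfty : ∀ f : carrier, ∀ ε : ℝ, 0 < ε → {x : G | ε ≤ ‖coeFn f x‖}.Finite
  /-- `‖f‖_∞ ≤ ‖f‖_{A(G)}`. -/
  eval_le : ∀ (f : carrier) (x : G), ‖coeFn f x‖ ≤ ‖f‖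
  delta : G → carrier
  coeFn_delta : ∀ x : G, coeFn (delta x) = Set.indicator {x} (fun _ => (1 : ℂ))
  norm_delta : ∀ x : G, ‖delta x‖ = 1
  ideal_classification :
    (∀ f : carrier, f ∈ closure {y : carrier | ∃ a : carrier, y = a * f}) →
    ∀ I : Submodule ℂ carrier, IsClosed (I : Set carrier) →
      (∀ a : carrier, ∀ f ∈ I, a * f ∈ I) →
      ∃ E : Set G, (I : Set carrier) = {f : carrier | ∀ x ∈ E, coeFn f x = 0}

attribute [instance] FourierAlgebraModel.nring FourierAlgebraModel.nalg
  FourierAlgebraModel.complete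

/-!
A closed ideal is `I(E)` for some `E ⊆ G`. Since `G` is countable, the series
`g = ∑ 2⁻ⁿ⁽ˣ⁾ δ_x` over `x ∉ E` (for an enumeration `n` of `Eᶜ`) converges and vanishes exactly on
`E`. The closure of the principal ideal generated by `g` is again some `I(F)`; it contains `g`, so
`F` lies in the zero set `E` of `g`, whence `I(E) ⊆ I(F) ⊆ I(E)`.
-/

open Function

theorem setOf_mul_add_smul_eq_span {R A : Type*} [CommSemiring R] [CommSemiring A] [Algebra R A]
    (g : A) : {y : A | ∃ (a : A) (s : R), y = a * g + s • g} = (Ideal.span {g} : Set A) := by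
  ext y
  simp only [Set.mem_ofPred_eq, SetLike.mem_coe, Ideal.mem_span_singleton']
  constructor
  · rintro ⟨a, s, rfl⟩
    exact ⟨a + algebraMap R A s, by rw [add_mul, Algebra.smul_def]⟩
  · rintro ⟨a, rfl⟩
    exact ⟨a, 0, by rw [zero_smul, add_zero]⟩

namespace FourierAlgebraModel

variable {G : Type*} [Group G] (M : FourierAlgebraModel G)

noncomputable def evalCLM (x : G) : M.carrier →L[ℂ] ℂ :=
  LinearMap.mkContinuous ((LinearMap.proj x).comp M.coeFn.toLinearMap) 1 fun f => by
    simpa using M.eval_le f x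

@[simp]
theorem evalCLM_apply (x : G) (f : M.carrier) : M.evalCLM x f = M.coeFn f x :=
  rfl

theorem coeFn_tsum {ι : Type*} {f : ι → M.carrier} (hf : Summable f) (x : G) :
    M.coeFn (∑' i, f i) x = ∑' i, M.coeFn (f i) x :=
  (M.evalCLM x).map_tsum hf

theorem isClosed_setOf_support_subset (s : Set G) :
    IsClosed {f : M.carrier | support (M.coeFn f) ⊆ s} := by
  simp only [support_subset_iff', Set.ofPred_forall]
  exact isClosed_iInter fun x => isClosed_iInter fun _ =>
    isClosed_eq (M.evalCLM x).continuous continuous_const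

theorem exists_support_eq {S : Set G} (hS : S.Countable) :
    ∃ g : M.carrier, support (M.coeFn g) = S := by
  have := hS.to_subtype
  obtain ⟨n, hn⟩ := Countable.exists_injective_nat S
  have hsum : Summable fun s : S => (2⁻¹ : ℂ) ^ n s • M.delta s := by
    refine Summable.of_norm ?_
    simp only [norm_smul, M.norm_delta, mul_one, norm_pow, norm_inv, Complex.norm_ofNat]
    exact (summable_geometric_of_lt_one (by norm_num) (by norm_num)).comp_injective hn
  refine ⟨∑' s : S, (2⁻¹ : ℂ) ^ n s • M.delta s, ?_⟩
  ext x
  simp only [mem_support, M.coeFn_tsum hsum, map_smul, Pi.smul_apply, M.coeFn_delta, smul_eq_mul]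
  by_cases hx : x ∈ S
  · rw [tsum_eq_single ⟨x, hx⟩ fun s hs => ?_]
    · simpa using hx
    · simp [Set.indicator_of_notMem, Ne.symm (Subtype.coe_ne_coe.mpr hs)]
  · have : ∀ s : S, x ≠ s := fun s h => hx (h ▸ s.2)
    simp [hx, this]

theorem closure_span_singleton_eq
    (hmod : ∀ f : M.carrier, f ∈ closure {y : M.carrier | ∃ a : M.carrier, y = a * f})
    (g : M.carrier) :
    closure (Ideal.span {g} : Set M.carrier) =
      {f | support (M.coeFn f) ⊆ support (M.coeFn g)} := by
  obtain ⟨F, hF⟩ := M.ideal_classification hmod ((Ideal.span {g}).closure.restrictScalars ℂ)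
    isClosed_closure fun a _ hf => Ideal.mul_mem_left _ a hf
  apply subset_antisymm
  · refine closure_minimal ?_ (M.isClosed_setOf_support_subset _)
    intro f hf
    obtain ⟨a, rfl⟩ := Ideal.mem_span_singleton'.1 hf
    rw [Set.mem_ofPred_eq, map_mul]
    exact support_mul_subset_right _ _
  · have hgF : g ∈ ((Ideal.span {g}).closure.restrictScalars ℂ : Set M.carrier) :=
      subset_closure (Ideal.mem_span_singleton_self g)
    intro f hf
    change f ∈ ((Ideal.span {g}).closure.restrictScalars ℂ : Set M.carrier)
    rw [hF] at hgF ⊢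
    exact fun x hx => notMem_support.1 fun hfx => hf hfx (hgF x hx)

end FourierAlgebraModel

/-- Let `G` be a countable discrete group such that `f ∈ closure (A(G)·f)` for
all `f ∈ A(G)`. Then `A(G)` is topologically Noetherian: every closed ideal of `A(G)` is
topologically principal. -/
theorem fourierAlgebra_topologically_noetherian_of_countable
    {G : Type*} [Group G] [Countable G] (M : FourierAlgebraModel G)
    (hmod : ∀ f : M.carrier, f ∈ closure {y : M.carrier | ∃ a : M.carrier, y = a * f}) :
    ∀ I : Submodule ℂ M.carrier, IsClosed (I : Set M.carrier) →
      (∀ a : M.carrier, ∀ f ∈ I, a * f ∈ I) →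
      ∃ g ∈ I, (I : Set M.carrier) =
        closure {y : M.carrier | ∃ (a : M.carrier) (s : ℂ), y = a * g + s • g} := by
  intro I hI hmul
  obtain ⟨E, hE⟩ := M.ideal_classification hmod I hI hmul
  obtain ⟨g, hg⟩ := M.exists_support_eq (Set.to_countable Eᶜ)
  have hIg : (I : Set M.carrier) = {f | support (M.coeFn f) ⊆ support (M.coeFn g)} := by
    simp only [hE, hg, support_subset_iff', Set.mem_compl_iff, not_not]
  refine ⟨g, ?_, ?_⟩
  · rw [← SetLike.mem_coe, hIg]
    exact Set.Subset.rfl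
  · rw [setOf_mul_add_smul_eq_span, M.closure_span_singleton_eq hmod, hIg]
end

section
/- Let G be a discrete group. If the Fourier algebra A(G) is topologically Noetherian (in particular if A(G) itself is topologically finitely generated as an ideal), then G is countable. -/
theorem countable_support_of_finite_setOf_le_norm {X E : Type*} [NormedAddCommGroup E]
    {f : X → E} (hf : ∀ ε : ℝ, 0 < ε → {x | ε ≤ ‖f x‖}.Finite) :
    (Function.support f).Countable := by
  have hcover : Function.support f ⊆ ⋃ m : ℕ, {x | 1 / ((m : ℝ) + 1) ≤ ‖f x‖} := by
    intro x hx
    obtain ⟨m, hm⟩ := exists_nat_one_div_lt (norm_pos_iff.mpr hx)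
    exact Set.mem_iUnion.2 ⟨m, hm.le⟩
  exact (Set.countable_iUnion fun m => (hf _ (by positivity)).countable).mono hcover

namespace FourierAlgebraModel

variable {G : Type*} [Group G] (M : FourierAlgebraModel G)

theorem countable_support_coeFn (f : M.carrier) : (Function.support (M.coeFn f)).Countable :=
  countable_support_of_finite_setOf_le_norm (M.zeroAtInfty f)

theorem continuous_coeFn_apply (x : G) : Continuous fun f : M.carrier => M.coeFn f x :=
  AddMonoidHomClass.continuous_of_bound (LinearMap.proj x ∘ₗ M.coeFn.toLinearMap) 1 fun f => by
    simpa using M.eval_le f x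

theorem isClosed_setOf_coeFn_apply_eq_zero (x : G) :
    IsClosed {f : M.carrier | M.coeFn f x = 0} :=
  isClosed_eq (M.continuous_coeFn_apply x) continuous_const

theorem coeFn_delta_self (x : G) : M.coeFn (M.delta x) x = 1 := by
  simp [M.coeFn_delta]

theorem exists_coeFn_apply_ne_zero_of_mem_closure {n : ℕ} {h : Fin n → M.carrier}
    {g : M.carrier} {x : G}
    (hg : g ∈ closure {y : M.carrier |
      ∃ (a : Fin n → M.carrier) (s : Fin n → ℂ), y = ∑ i, (a i * h i + s i • h i)})
    (hgx : M.coeFn g x ≠ 0) :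
    ∃ i, M.coeFn (h i) x ≠ 0 := by
  by_contra! hvanish
  have hsub : {y : M.carrier |
      ∃ (a : Fin n → M.carrier) (s : Fin n → ℂ), y = ∑ i, (a i * h i + s i • h i)} ⊆
      {f | M.coeFn f x = 0} := by
    rintro _ ⟨a, s, rfl⟩
    simp [Finset.sum_apply, hvanish]
  exact hgx (closure_minimal hsub (M.isClosed_setOf_coeFn_apply_eq_zero x) hg)

end FourierAlgebraModel

/-- Let `G` be a discrete group. If the Fourier algebra `A(G)` is
topologically Noetherian (every closed ideal is topologically finitely generated), then `G`
is countable. -/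
theorem countable_of_fourierAlgebra_topologically_noetherian
    {G : Type*} [Group G] (M : FourierAlgebraModel G)
    (hNoeth : ∀ I : Submodule ℂ M.carrier, IsClosed (I : Set M.carrier) →
      (∀ a : M.carrier, ∀ f ∈ I, a * f ∈ I) →
      ∃ (n : ℕ) (h : Fin n → M.carrier), (∀ i, h i ∈ I) ∧
        (I : Set M.carrier) = closure {y : M.carrier |
          ∃ (a : Fin n → M.carrier) (s : Fin n → ℂ), y = ∑ i, (a i * h i + s i • h i)}) :
    Countable G := by
  obtain ⟨n, h, -, htop⟩ := hNoeth ⊤ isClosed_univ fun _ _ _ => trivial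
  have hcover : Set.univ ⊆ ⋃ i, Function.support (M.coeFn (h i)) := by
    intro x _
    have hδ : M.delta x ∈ ((⊤ : Submodule ℂ M.carrier) : Set M.carrier) := trivial
    rw [htop] at hδ
    simpa using M.exists_coeFn_apply_ne_zero_of_mem_closure hδ (by simp [M.coeFn_delta_self x])
  exact Set.countable_univ_iff.mp
    ((Set.countable_iUnion fun i => M.countable_support_coeFn (h i)).mono hcover)
end

section
/- Let E be a Banach space and F ⊆ E′ a closed separable linear subspace of the dual. Then there exists an approximable operator T ∈ 𝒜(E) such that the closure of the image of the adjoint T′ equals F. -/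
/-!
If `(bᵢ, βᵢ)` is a biorthogonal system in `E × E′` and the functionals `μᵢ` lie in `F`, then an
absolutely convergent series `T = ∑ bᵢ ⊗ μᵢ` is a norm limit of finite-rank operators, and
`T′ l = ∑ l(bᵢ) μᵢ`. Hence `T′` maps into the closed space `F`, while `T′ βₖ = μₖ`, so the closure
of the image of `T′` is `F` as soon as the `μᵢ` span a dense subspace of `F`.

If `E` is finite-dimensional, take for `μ` a basis of `F`, for `b` a family dual to it, and
`β = μ`. Otherwise a biorthogonal sequence is built inductively with Hahn–Banach, and `μ` is a dense
sequence of `F` scaled down so that `∑ ‖μₙ‖ ‖bₙ‖` converges.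
-/

variable {E : Type*} [NormedAddCommGroup E] [NormedSpace ℂ E] [CompleteSpace E]

/-- The algebra `𝒜(E)` of approximable operators: the norm closure of the finite-rank operators
in `B(E)`. -/
def ApproxOps (E : Type*) [NormedAddCommGroup E] [NormedSpace ℂ E] : Set (E →L[ℂ] E) :=
  closure {T : E →L[ℂ] E | FiniteDimensional ℂ (LinearMap.range (T : E →ₗ[ℂ] E))}

/-- The image of the adjoint (Banach-space transpose) `T′ : E′ → E′`, `λ ↦ λ ∘ T`. -/
def imAdj (T : E →L[ℂ] E) : Set (StrongDual ℂ E) :=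
  Set.range fun l : StrongDual ℂ E => l.comp T

open Set Filter

section Biorthogonal

variable {𝕜 X : Type*} [RCLike 𝕜] [NormedAddCommGroup X] [NormedSpace 𝕜 X]

theorem exists_strongDual_eq_one_forall_mem_eq_zero {M : Submodule 𝕜 X} [FiniteDimensional 𝕜 M]
    {x : X} (hx : x ∉ M) : ∃ f : StrongDual 𝕜 X, f x = 1 ∧ ∀ m ∈ M, f m = 0 := by
  obtain ⟨P, hP⟩ := Submodule.ClosedComplemented.of_finiteDimensional M
  have hx' : x - P x ≠ 0 := fun h => hx (sub_eq_zero.mp h ▸ (P x).2)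
  obtain ⟨g, hg⟩ := SeparatingDual.exists_eq_one (R := 𝕜) hx'
  refine ⟨g.comp (ContinuousLinearMap.id 𝕜 X - M.subtypeL.comp P), hg, fun m hm => ?_⟩
  simp [hP ⟨m, hm⟩]

theorem exists_forall_apply_eq_zero_notMem (hX : ¬FiniteDimensional 𝕜 X) {ι : Type*} [Finite ι]
    (f : ι → StrongDual 𝕜 X) (M : Submodule 𝕜 X) [FiniteDimensional 𝕜 M] :
    ∃ y, (∀ i, f i y = 0) ∧ y ∉ M := by
  by_contra! h
  let Φ : X →ₗ[𝕜] ι → 𝕜 := LinearMap.pi fun i => (f i : X →ₗ[𝕜] 𝕜)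
  have : FiniteDimensional 𝕜 (LinearMap.ker Φ) :=
    Submodule.finiteDimensional_of_le fun y hy => h y fun i => congrFun hy i
  refine hX (Module.finite_def.mpr (Submodule.fg_of_fg_map_of_fg_inf_ker Φ ?_ ?_))
  · exact (Submodule.fg_iff_finiteDimensional _).mpr inferInstance
  · exact (Submodule.fg_iff_finiteDimensional _).mpr
      (Submodule.finiteDimensional_of_le inf_le_right)

theorem exists_biorthogonal_seq (hX : ¬FiniteDimensional 𝕜 X) :
    ∃ (b : ℕ → X) (β : ℕ → StrongDual 𝕜 X),
      (∀ n, β n (b n) = 1) ∧ ∀ m n, m ≠ n → β m (b n) = 0 := by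
  obtain ⟨p, hp1, hp0⟩ := exists_seq_of_forall_finset_exists
    (fun p : X × StrongDual 𝕜 X => p.2 p.1 = 1) (fun p q => p.2 q.1 = 0 ∧ q.2 p.1 = 0)
    fun s _ => by
      let M := Submodule.span 𝕜 (Prod.fst '' (s : Set (X × StrongDual 𝕜 X)))
      have : FiniteDimensional 𝕜 M := FiniteDimensional.span_of_finite 𝕜 (s.finite_toSet.image _)
      obtain ⟨y, hy0, hyM⟩ := exists_forall_apply_eq_zero_notMem hX (fun q : s => q.1.2) M
      obtain ⟨β, hβy, hβM⟩ := exists_strongDual_eq_one_forall_mem_eq_zero hyM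
      exact ⟨(y, β), hβy, fun q hq =>
        ⟨hy0 ⟨q, hq⟩, hβM _ (Submodule.subset_span ⟨q, hq, rfl⟩)⟩⟩
  refine ⟨fun n => (p n).1, fun n => (p n).2, hp1, fun m n hmn => ?_⟩
  rcases hmn.lt_or_gt with h | h
  exacts [(hp0 m n h).1, (hp0 n m h).2]

theorem exists_biorthogonal_of_linearIndependent {ι : Type*} [Finite ι]
    {μ : ι → StrongDual 𝕜 X} (hμ : LinearIndependent 𝕜 μ) :
    ∃ b : ι → X, (∀ i, μ i (b i) = 1) ∧ ∀ i j, i ≠ j → μ i (b j) = 0 := by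
  classical
  have hμ' : LinearIndependent 𝕜 fun i (x : X) => μ i x :=
    hμ.map_injOn ((LinearMap.ltoFun 𝕜 X 𝕜 𝕜).comp (ContinuousLinearMap.coeLM 𝕜))
      fun f _ g _ h => ContinuousLinearMap.coeFn_injective h
  have hsurj : Function.Surjective fun (x : X) i => μ i x := by
    let Φ : X →ₗ[𝕜] ι → 𝕜 := LinearMap.pi fun i => (μ i : X →ₗ[𝕜] 𝕜)
    have h := span_flip_eq_top_iff_linearIndependent.mpr hμ'
    rwa [show range (flip fun i (x : X) => μ i x) = LinearMap.range Φ from rfl,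
      Submodule.span_eq, LinearMap.range_eq_top] at h
  choose b hb using fun j : ι => hsurj (Pi.single j 1)
  refine ⟨b, fun i => ?_, fun i j hij => ?_⟩
  · simpa using congrFun (hb i) i
  · simpa [hij] using congrFun (hb j) i

theorem Submodule.exists_biorthogonal_span_eq (F : Submodule 𝕜 (StrongDual 𝕜 X))
    [FiniteDimensional 𝕜 F] :
    ∃ (n : ℕ) (b : Fin n → X) (μ : Fin n → StrongDual 𝕜 X), (∀ i, μ i (b i) = 1) ∧
      (∀ i j, i ≠ j → μ i (b j) = 0) ∧ span 𝕜 (range μ) = F := by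
  have : Module.Free 𝕜 F := Module.Free.of_divisionRing 𝕜 F
  let v := Module.finBasis 𝕜 F
  obtain ⟨b, hb1, hb0⟩ := exists_biorthogonal_of_linearIndependent
    (v.linearIndependent.map_injOn F.subtype Subtype.val_injective.injOn)
  refine ⟨_, b, _, hb1, hb0, ?_⟩
  have := congrArg (map F.subtype) v.span_eq
  rwa [map_span, map_top, range_subtype, ← range_comp] at this

theorem Submodule.exists_seq_norm_le_subset_closure_span (F : Submodule 𝕜 X)
    (hF : TopologicalSpace.IsSeparable (F : Set X)) {ε : ℕ → ℝ} (hε : ∀ n, 0 < ε n) :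
    ∃ μ : ℕ → X, (∀ n, μ n ∈ F) ∧ (∀ n, ‖μ n‖ ≤ ε n) ∧
      (F : Set X) ⊆ closure (span 𝕜 (range μ)) := by
  have := hF.separableSpace
  have : Nonempty F := ⟨0⟩
  obtain ⟨u, hu⟩ := TopologicalSpace.exists_dense_seq F
  set c : ℕ → ℝ := fun n => ε n / (1 + ‖(u n : X)‖)
  have hc : ∀ n, 0 < c n := fun n => div_pos (hε n) (by positivity)
  set μ : ℕ → X := fun n => (c n : 𝕜) • (u n : X)
  refine ⟨μ, fun n => F.smul_mem _ (u n).2, fun n => ?_, fun y hy => ?_⟩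
  · rw [norm_smul, RCLike.norm_ofReal, abs_of_pos (hc n), div_mul_eq_mul_div,
      div_le_iff₀ (by positivity)]
    nlinarith [hε n, norm_nonneg (u n : X)]
  have hu_span : ∀ n, (u n : X) ∈ span 𝕜 (range μ) := fun n => by
    have hcn : (c n : 𝕜) ≠ 0 := RCLike.ofReal_ne_zero.mpr (hc n).ne'
    simpa [μ, inv_smul_smul₀ hcn] using
      (span 𝕜 (range μ)).smul_mem (c n : 𝕜)⁻¹ (subset_span (mem_range_self n))
  exact closure_mono (range_subset_iff.mpr hu_span) <| map_mem_closure continuous_subtype_val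
    (hu ⟨y, hy⟩) (by rintro _ ⟨n, rfl⟩; exact mem_range_self n)

end Biorthogonal

section RankOneSeries

variable {X : Type*} [NormedAddCommGroup X] [NormedSpace ℂ X] {ι : Type*} {b : ι → X}
  {μ : ι → StrongDual ℂ X} {T : X →L[ℂ] X}

theorem finiteDimensional_range_sum_smulRight (s : Finset ι) :
    FiniteDimensional ℂ
      (LinearMap.range ((∑ i ∈ s, (μ i).smulRight (b i) : X →L[ℂ] X) : X →ₗ[ℂ] X)) := by
  have : FiniteDimensional ℂ (Submodule.span ℂ (b '' s)) :=
    FiniteDimensional.span_of_finite ℂ (s.finite_toSet.image b)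
  refine Submodule.finiteDimensional_of_le (S₂ := Submodule.span ℂ (b '' s)) ?_
  rintro _ ⟨x, rfl⟩
  simp only [ContinuousLinearMap.toLinearMap_sum, ContinuousLinearMap.coe_coe, LinearMap.coe_sum,
    Finset.sum_apply, ContinuousLinearMap.smulRight_apply]
  exact Submodule.sum_mem _ fun i hi =>
    Submodule.smul_mem _ _ (Submodule.subset_span (mem_image_of_mem b hi))

theorem mem_approxOps_of_hasSum (h : HasSum (fun i => (μ i).smulRight (b i)) T) :
    T ∈ ApproxOps X :=
  mem_closure_of_tendsto h (Eventually.of_forall finiteDimensional_range_sum_smulRight)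

theorem hasSum_comp_of_hasSum (h : HasSum (fun i => (μ i).smulRight (b i)) T)
    (l : StrongDual ℂ X) : HasSum (fun i => l (b i) • μ i) (l.comp T) := by
  convert h.mapL (ContinuousLinearMap.compL ℂ X X ℂ l) using 1
  · ext i x
    simp [mul_comm]
  · rfl

theorem imAdj_subset_of_hasSum (h : HasSum (fun i => (μ i).smulRight (b i)) T)
    {F : Submodule ℂ (StrongDual ℂ X)} (hF : IsClosed (F : Set (StrongDual ℂ X)))
    (hμ : ∀ i, μ i ∈ F) : imAdj T ⊆ F := by
  rintro _ ⟨l, rfl⟩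
  exact hF.mem_of_tendsto (hasSum_comp_of_hasSum h l)
    (Eventually.of_forall fun s => F.sum_mem fun i _ => F.smul_mem _ (hμ i))

theorem span_range_subset_imAdj_of_hasSum (h : HasSum (fun i => (μ i).smulRight (b i)) T)
    {β : ι → StrongDual ℂ X} (hβ1 : ∀ i, β i (b i) = 1) (hβ0 : ∀ i j, i ≠ j → β i (b j) = 0) :
    (Submodule.span ℂ (range μ) : Set (StrongDual ℂ X)) ⊆ imAdj T := by
  change _ ⊆ ((LinearMap.range ((ContinuousLinearMap.compL ℂ X X ℂ).flip T :
    StrongDual ℂ X →ₗ[ℂ] StrongDual ℂ X)) : Set (StrongDual ℂ X))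
  rw [SetLike.coe_subset_coe, Submodule.span_le]
  rintro _ ⟨k, rfl⟩
  refine ⟨β k, ?_⟩
  show (β k).comp T = μ k
  rw [← (hasSum_comp_of_hasSum h (β k)).tsum_eq, tsum_eq_single k fun i hi => by
    rw [hβ0 k i (Ne.symm hi)]; exact zero_smul ℂ (μ i)]
  simp [hβ1]

theorem closure_imAdj_eq_of_hasSum (h : HasSum (fun i => (μ i).smulRight (b i)) T)
    {β : ι → StrongDual ℂ X} (hβ1 : ∀ i, β i (b i) = 1) (hβ0 : ∀ i j, i ≠ j → β i (b j) = 0)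
    {F : Submodule ℂ (StrongDual ℂ X)} (hF : IsClosed (F : Set (StrongDual ℂ X)))
    (hμF : ∀ i, μ i ∈ F)
    (hFμ : (F : Set (StrongDual ℂ X)) ⊆ closure (Submodule.span ℂ (range μ))) :
    closure (imAdj T) = F :=
  (closure_minimal (imAdj_subset_of_hasSum h hF hμF) hF).antisymm
    (hFμ.trans (closure_mono (span_range_subset_imAdj_of_hasSum h hβ1 hβ0)))

end RankOneSeries

/-- Let `E` be a Banach space and `F ⊆ E′` a closed separable linear subspace
of the dual. Then there is an approximable operator `T ∈ 𝒜(E)` with `closure (im T′) = F`. -/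
theorem exists_approximable_with_imAdj_closure_eq
    (F : Submodule ℂ (StrongDual ℂ E)) (hFc : IsClosed (F : Set (StrongDual ℂ E)))
    (hFs : TopologicalSpace.IsSeparable (F : Set (StrongDual ℂ E))) :
    ∃ T ∈ ApproxOps E, closure (imAdj T) = (F : Set (StrongDual ℂ E)) := by
  by_cases hE : FiniteDimensional ℂ E
  · obtain ⟨n, b, μ, hμ1, hμ0, hspan⟩ := F.exists_biorthogonal_span_eq
    have h := hasSum_fintype fun i => (μ i).smulRight (b i)
    refine ⟨_, mem_approxOps_of_hasSum h, closure_imAdj_eq_of_hasSum h hμ1 hμ0 hFc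
      (fun i => hspan ▸ Submodule.subset_span (mem_range_self i)) (hspan ▸ subset_closure)⟩
  · obtain ⟨b, β, hβ1, hβ0⟩ := exists_biorthogonal_seq hE
    obtain ⟨μ, hμF, hμ, hFμ⟩ := F.exists_seq_norm_le_subset_closure_span hFs
      (ε := fun n => (1 / 2) ^ n / (1 + ‖b n‖)) fun n => by positivity
    have h : Summable fun n => (μ n).smulRight (b n) := by
      refine .of_norm_bounded summable_geometric_two fun n => ?_
      rw [ContinuousLinearMap.norm_smulRight_apply]
      calc ‖μ n‖ * ‖b n‖ ≤ (1 / 2) ^ n / (1 + ‖b n‖) * (1 + ‖b n‖) := by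
            gcongr
            exacts [hμ n, by linarith]
        _ = (1 / 2) ^ n := div_mul_cancel₀ _ (by positivity)
    exact ⟨_, mem_approxOps_of_hasSum h.hasSum,
      closure_imAdj_eq_of_hasSum h.hasSum hβ1 hβ0 hFc hμF hFμ⟩
end

section
/- Let A be a Banach algebra which is weak*-dense in its multiplier algebra M(A), where M(A) is a dual Banach algebra. Suppose every closed left ideal I of A satisfies I = closure(A♯μ₁ + ⋯ + A♯μₙ) for some n and μ₁,…,μₙ ∈ M(A). Then M(A) is weak*-topologically left Noetherian. In particular this holds if A is norm-topologically left Noetherian. -/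
open MultiplierAlgebra Topology Set

/-!
Weak*-density of `A` and separate weak*-continuity of the product make `A` a right ideal of
`M(A)`: `δ = a μ - μ.snd a` satisfies `δ A = 0`, hence `δ = δ · 1 = 0`. So for a weak*-closed left
ideal `J` and `μ ∈ J`, `μ = 1 · μ` lies in the weak*-closure of `A μ ⊆ A ∩ J`. As the weak* topology
is coarser than the norm topology, `A ∩ J` is a closed left ideal of `A`; by hypothesis it is the
closure of some `A♯μ₁ + ⋯ + A♯μₙ`, which contains the `μᵢ` and lies in `M(A)μ₁ + ⋯ + M(A)μₙ ⊆ J`.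
-/

theorem t2Space_induced_of_injective {α β : Type*} [TopologicalSpace β] [T2Space β] {f : α → β}
    (hf : Function.Injective f) : @T2Space α (TopologicalSpace.induced f ‹TopologicalSpace β›) :=
  letI : TopologicalSpace α := .induced f ‹_›
  IsEmbedding.t2Space ⟨⟨rfl⟩, hf⟩

section DenseSubset

variable {R : Type*} {t : TopologicalSpace R} {D : Set R}

theorem Dense.eq_zero_of_forall_mul_eq_zero [MulZeroOneClass R] [T2Space R] (hD : Dense D)
    {δ : R} (hδ : Continuous (δ * ·)) (h : ∀ d ∈ D, δ * d = 0) : δ = 0 := by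
  simpa using congrFun (hδ.ext_on hD continuous_const h) 1

theorem Dense.mem_closure_of_forall_mul_mem [MulOneClass R] (hD : Dense D) {m : R}
    (hm : Continuous (· * m)) {S : Set R} (h : ∀ d ∈ D, d * m ∈ S) : m ∈ closure S := by
  simpa only [one_mul] using map_mem_closure hm (hD 1) h

end DenseSubset

namespace DoubleCentralizer

variable {𝕜 A : Type*} [NontriviallyNormedField 𝕜] [NonUnitalNormedRing A] [NormedSpace 𝕜 A]
  [SMulCommClass 𝕜 A A] [IsScalarTower 𝕜 A A]

variable (𝕜 A) in
@[simps]
noncomputable def coeLinearMap : A →ₗ[𝕜] 𝓜(𝕜, A) where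
  toFun := DoubleCentralizer.coe 𝕜
  map_add' _ _ := ext _ _ _ _ <| Prod.ext (map_add _ _ _) (map_add _ _ _)
  map_smul' _ _ := ext _ _ _ _ <| Prod.ext (map_smul _ _ _) (map_smul _ _ _)

@[simp, norm_cast]
theorem coe_mul (a b : A) : ((a * b : A) : 𝓜(𝕜, A)) = a * b :=
  ext _ _ _ _ <| Prod.ext (ContinuousLinearMap.ext fun _ => mul_assoc _ _ _)
    (ContinuousLinearMap.ext fun _ => (mul_assoc _ _ _).symm)

variable (𝕜 A) in
theorem continuous_coe : Continuous (DoubleCentralizer.coe 𝕜 : A → 𝓜(𝕜, A)) := by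
  rw [isUniformEmbedding_toProdMulOpposite.isEmbedding.continuous_iff]
  exact (ContinuousLinearMap.mul 𝕜 A).continuous.prodMk
    (MulOpposite.continuous_op.comp (ContinuousLinearMap.mul 𝕜 A).flip.continuous)

theorem coe_mul_mul_coe (a b : A) (μ : 𝓜(𝕜, A)) :
    (a : 𝓜(𝕜, A)) * μ * b = ((μ.snd a * b : A) : 𝓜(𝕜, A)) := by
  refine ext _ _ _ _ (Prod.ext (ContinuousLinearMap.ext fun x => ?_)
    (ContinuousLinearMap.ext fun x => ?_))
  · change a * μ.fst (b * x) = μ.snd a * b * x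
    rw [← μ.central, mul_assoc]
  · change μ.snd (x * a) * b = x * (μ.snd a * b)
    rw [μ.central, μ.central, mul_assoc]

/-- `A♯μ₁ + ⋯ + A♯μₙ`, where `A♯ = A ⊕ 𝕜` is the unitization of `A`. -/
def unitizationCombinations {n : ℕ} (μ : Fin n → 𝓜(𝕜, A)) : Set 𝓜(𝕜, A) :=
  {y | ∃ (c : Fin n → A) (s : Fin n → 𝕜), y = ∑ i, ((c i : 𝓜(𝕜, A)) * μ i + s i • μ i)}

theorem mem_unitizationCombinations_self {n : ℕ} (μ : Fin n → 𝓜(𝕜, A)) (i : Fin n) :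
    μ i ∈ unitizationCombinations μ := by
  refine ⟨0, Pi.single i 1, ?_⟩
  simp [← coeLinearMap_apply, Pi.single_apply, ite_smul]

theorem unitizationCombinations_subset {n : ℕ} (μ : Fin n → 𝓜(𝕜, A)) :
    unitizationCombinations μ ⊆ {y | ∃ c : Fin n → 𝓜(𝕜, A), y = ∑ i, c i * μ i} := by
  rintro _ ⟨c, s, rfl⟩
  exact ⟨fun i => c i + s i • 1, by simp only [add_mul, smul_mul_assoc, one_mul]⟩

section WeakTopology

variable {τ : TopologicalSpace 𝓜(𝕜, A)} [@T2Space _ τ]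
  (hsep : ∀ m : 𝓜(𝕜, A), Continuous[τ, τ] (m * ·) ∧ Continuous[τ, τ] (· * m))
  (hdense : @Dense _ τ (range (DoubleCentralizer.coe 𝕜 : A → 𝓜(𝕜, A))))
include hsep hdense

theorem coe_mul_eq_coe_snd (a : A) (μ : 𝓜(𝕜, A)) :
    (a : 𝓜(𝕜, A)) * μ = (μ.snd a : 𝓜(𝕜, A)) := by
  refine sub_eq_zero.1 <| hdense.eq_zero_of_forall_mul_eq_zero (hsep _).1 ?_
  rintro _ ⟨b, rfl⟩
  rw [sub_mul, coe_mul_mul_coe, coe_mul, sub_self]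

theorem subset_closure_image_coe_comap {J : Submodule 𝕜 𝓜(𝕜, A)}
    (hJ : ∀ m : 𝓜(𝕜, A), ∀ x ∈ J, m * x ∈ J) :
    (J : Set 𝓜(𝕜, A)) ⊆
      closure[τ] (DoubleCentralizer.coe 𝕜 '' (J.comap (coeLinearMap 𝕜 A) : Set A)) := by
  intro μ hμ
  refine hdense.mem_closure_of_forall_mul_mem (hsep μ).2 ?_
  rintro _ ⟨a, rfl⟩
  refine ⟨μ.snd a, ?_, (coe_mul_eq_coe_snd hsep hdense a μ).symm⟩
  change ((μ.snd a : A) : 𝓜(𝕜, A)) ∈ J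
  rw [← coe_mul_eq_coe_snd hsep hdense]
  exact hJ _ _ hμ

theorem exists_generators_of_isClosed_leftIdeal (hle : UniformSpace.toTopologicalSpace ≤ τ)
    (hgen : ∀ I : Submodule 𝕜 A, IsClosed (I : Set A) → (∀ a : A, ∀ x ∈ I, a * x ∈ I) →
      ∃ (n : ℕ) (μ : Fin n → 𝓜(𝕜, A)),
        DoubleCentralizer.coe 𝕜 '' (I : Set A) = closure[τ] (unitizationCombinations μ))
    {J : Submodule 𝕜 𝓜(𝕜, A)} (hJc : IsClosed[τ] (J : Set 𝓜(𝕜, A)))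
    (hJ : ∀ m : 𝓜(𝕜, A), ∀ x ∈ J, m * x ∈ J) :
    ∃ (n : ℕ) (μ : Fin n → 𝓜(𝕜, A)), (∀ i, μ i ∈ J) ∧
      (J : Set 𝓜(𝕜, A)) = closure[τ] {y | ∃ c : Fin n → 𝓜(𝕜, A), y = ∑ i, c i * μ i} := by
  obtain ⟨n, μ, hμ⟩ := hgen (J.comap (coeLinearMap 𝕜 A))
    (hJc.preimage (continuous_le_rng hle (continuous_coe 𝕜 A)))
    (fun a x hx => by simpa using hJ a _ hx)
  have hμJ : ∀ i, μ i ∈ J := fun i => by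
    obtain ⟨a, ha, hai⟩ := hμ ▸ subset_closure (mem_unitizationCombinations_self μ i)
    exact hai ▸ ha
  refine ⟨n, μ, hμJ, (subset_closure_image_coe_comap hsep hdense hJ).trans ?_ |>.antisymm ?_⟩
  · refine closure_minimal ?_ isClosed_closure
    rw [hμ]
    exact closure_mono (unitizationCombinations_subset μ)
  · refine closure_minimal ?_ hJc
    rintro _ ⟨c, rfl⟩
    exact J.sum_mem fun i _ => hJ _ _ (hμJ i)

end WeakTopology

end DoubleCentralizer

variable {A : Type*} [NonUnitalNormedRing A] [NormedSpace ℂ A]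
  [SMulCommClass ℂ A A] [IsScalarTower ℂ A A] [CompleteSpace A]

/-- Let `A` be a Banach algebra which is weak*-dense in its multiplier algebra
`M(A) = 𝓜(ℂ, A)`, where `M(A)` is a dual Banach algebra (with predual `X`, weak* topology `τ`,
and separately weak*-continuous multiplication). Suppose every closed left ideal `I` of `A`
satisfies `I = closure(A♯μ₁ + ⋯ + A♯μₙ)` for some `n` and `μ₁, …, μₙ ∈ M(A)`. Then `M(A)` is
weak*-topologically left Noetherian: every weak*-closed left ideal of `M(A)` is the weak*-closure
of `M(A)μ₁ + ⋯ + M(A)μₙ` for some of its elements `μ₁, …, μₙ`. -/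
theorem multiplier_weakStar_topologically_left_noetherian
    (X : Type*) [NormedAddCommGroup X] [NormedSpace ℂ X]
    (Φ : 𝓜(ℂ, A) ≃L[ℂ] StrongDual ℂ X)
    (τ : TopologicalSpace 𝓜(ℂ, A))
    (hτ : τ = TopologicalSpace.induced
      (fun m => StrongDual.toWeakDual (Φ m)) inferInstance)
    (hsep : ∀ m : 𝓜(ℂ, A), @Continuous _ _ τ τ (fun x => m * x) ∧
      @Continuous _ _ τ τ (fun x => x * m))
    -- `A` is weak*-dense in `M(A)`
    (hdense : @Dense _ τ (Set.range (DoubleCentralizer.coe ℂ : A → 𝓜(ℂ, A))))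
    -- every closed left ideal of `A` is the norm closure of `A♯μ₁ + ⋯ + A♯μₙ` for
    -- suitable multipliers `μᵢ ∈ M(A)`
    (hgen : ∀ I : Submodule ℂ A, IsClosed (I : Set A) → (∀ a : A, ∀ x ∈ I, a * x ∈ I) →
      ∃ (n : ℕ) (μ : Fin n → 𝓜(ℂ, A)),
        (DoubleCentralizer.coe ℂ : A → 𝓜(ℂ, A)) '' (I : Set A) =
          closure {y : 𝓜(ℂ, A) | ∃ (c : Fin n → A) (s : Fin n → ℂ),
            y = ∑ i, (DoubleCentralizer.coe ℂ (c i) * μ i + s i • μ i)}) :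
    -- conclusion: `M(A)` is weak*-topologically left Noetherian
    ∀ J : Submodule ℂ 𝓜(ℂ, A), @IsClosed _ τ (J : Set 𝓜(ℂ, A)) →
      (∀ m : 𝓜(ℂ, A), ∀ x ∈ J, m * x ∈ J) →
      ∃ (n : ℕ) (μ : Fin n → 𝓜(ℂ, A)), (∀ i, μ i ∈ J) ∧
        (J : Set 𝓜(ℂ, A)) = @closure _ τ {y : 𝓜(ℂ, A) |
          ∃ c : Fin n → 𝓜(ℂ, A), y = ∑ i, c i * μ i} := by
  intro J hJc hJi
  subst hτ
  have := t2Space_induced_of_injective (StrongDual.toWeakDual.injective.comp Φ.injective)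
  exact DoubleCentralizer.exists_generators_of_isClosed_leftIdeal hsep hdense
    (continuous_iff_le_induced.1 (NormedSpace.Dual.toWeakDual_continuous.comp Φ.continuous))
    hgen hJc hJi
end

section
/- Let A be a compliant Banach algebra with a bounded approximate identity. Then the map I ↦ weak*-closure of I is a bijection from the set of closed left ideals of A onto the set of weak*-closed left ideals of M(A), with inverse J ↦ A ∩ J. -/
/-!
For `μ ∈ 𝓜(ℂ, A)` and `a ∈ A`, `μ.fst a` and `μ.snd a` are the products `μa` and `aμ`.

Closed subspaces of `A` are weakly closed and, by compliance, `μ ↦ bμ` is weak*-to-weak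
continuous; so if `μ` lies in the weak*-closure of a closed left ideal `I`, then `bμ ∈ I` for
every `b ∈ A`. For `μ = a ∈ A` this gives `e_i a ∈ I`, hence `a ∈ I` in the limit.

Conversely, let `m` lie in a weak*-closed left ideal `J`. By faithfulness each `e_i m` is an
element of `A`, so of `A ∩ J`, and the net `(e_i m)` is bounded; by Banach–Alaoglu it has a
weak* cluster point `μ`. Since `(e_i m) a = e_i (m a) → m a` and `a (e_i m) = (a e_i) m → a m` in
norm, compliance forces `μ a = m a` and `a μ = a m` for all `a`, i.e. `μ = m`.
-/

open MultiplierAlgebra Filter Set Topology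

set_option linter.unusedSectionVars false

theorem Set.MapsTo.closure_of_convex_of_continuous_dual {𝕜 E Y : Type*} [RCLike 𝕜]
    [AddCommGroup E] [TopologicalSpace E] [Module ℝ E] [Module 𝕜 E] [IsScalarTower ℝ 𝕜 E]
    [IsTopologicalAddGroup E] [ContinuousSMul 𝕜 E] [LocallyConvexSpace ℝ E]
    [TopologicalSpace Y] {f : Y → E} {S : Set Y} {s : Set E} (hf : MapsTo f S s)
    (hs : Convex ℝ s) (hsc : IsClosed s)
    (hfw : ∀ g : StrongDual 𝕜 E, Continuous fun y => g (f y)) :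
    MapsTo f (closure S) s := by
  intro y hy
  by_contra hy'
  obtain ⟨g, u, hgs, hgy⟩ := RCLike.geometric_hahn_banach_closed_point (𝕜 := 𝕜) hs hsc hy'
  have hclosed : IsClosed {z | RCLike.re (g (f z)) ≤ u} :=
    isClosed_le (RCLike.continuous_re.comp (hfw g)) continuous_const
  exact hgy.not_ge (closure_minimal (fun z hz => (hgs _ (hf hz)).le) hclosed hy)

theorem MapClusterPt.eq_of_tendsto_comp {X Z ι : Type*} [TopologicalSpace X] [TopologicalSpace Z]
    [T2Space Z] {l : Filter ι} {u : ι → X} {x : X} {f : X → Z} {z : Z}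
    (hx : MapClusterPt x l u) (hf : Continuous f) (hz : Tendsto (f ∘ u) l (𝓝 z)) : f x = z :=
  eq_of_nhds_neBot ((hx.continuousAt_comp hf.continuousAt).clusterPt.mono hz)

theorem ContinuousLinearEquiv.exists_mapClusterPt_toWeakDual_of_norm_le {𝕜 M X ι : Type*}
    [NontriviallyNormedField 𝕜] [ProperSpace 𝕜] [SeminormedAddCommGroup M] [NormedSpace 𝕜 M]
    [SeminormedAddCommGroup X] [NormedSpace 𝕜 X] (Φ : M ≃L[𝕜] StrongDual 𝕜 X)
    {l : Filter ι} [l.NeBot] {F : ι → M} {R : ℝ} (hF : ∀ i, ‖F i‖ ≤ R) :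
    ∃ μ : M, MapClusterPt (StrongDual.toWeakDual (Φ μ)) l
      fun i => StrongDual.toWeakDual (Φ (F i)) := by
  have hΦF : ∀ i, ‖Φ (F i)‖ ≤ ‖Φ.toContinuousLinearMap‖ * R :=
    fun i => Φ.toContinuousLinearMap.le_opNorm_of_le (hF i)
  obtain ⟨φ, -, hφ⟩ :=
    (WeakDual.isCompact_closedBall (𝕜 := 𝕜) (E := X) 0 _).exists_clusterPt
      (f := map (fun i => StrongDual.toWeakDual (Φ (F i))) l)
      (tendsto_principal.2 (Eventually.of_forall fun i => by simpa using hΦF i))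
  refine ⟨Φ.symm (WeakDual.toStrongDual φ), ?_⟩
  simpa [MapClusterPt] using hφ

namespace DoubleCentralizer

section

variable {𝕜 A : Type*} [NontriviallyNormedField 𝕜] [NonUnitalNormedRing A] [NormedSpace 𝕜 A]
  [SMulCommClass 𝕜 A A] [IsScalarTower 𝕜 A A]

theorem snd_mul (hA : ∀ x : A, (∀ a : A, x * a = 0) → x = 0) (m : 𝓜(𝕜, A)) (x a : A) :
    m.snd (x * a) = x * m.snd a :=
  sub_eq_zero.1 <| hA _ fun y => by
    rw [sub_mul, m.central, mul_assoc, mul_assoc, m.central, sub_self]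

theorem coe_mul_eq_coe_snd_s18 (hA : ∀ x : A, (∀ a : A, x * a = 0) → x = 0) (a : A)
    (m : 𝓜(𝕜, A)) : (a : 𝓜(𝕜, A)) * m = (m.snd a : 𝓜(𝕜, A)) :=
  DoubleCentralizer.ext 𝕜 A _ _ <| Prod.ext
    (ContinuousLinearMap.ext fun x => (m.central a x).symm)
    (ContinuousLinearMap.ext fun x => snd_mul hA m x a)

theorem norm_coe_le (a : A) : ‖(a : 𝓜(𝕜, A))‖ ≤ ‖a‖ := by
  rw [norm_def, Prod.norm_def]
  refine max_le (ContinuousLinearMap.opNorm_mul_apply_le 𝕜 A a)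
    (ContinuousLinearMap.opNorm_le_bound _ (norm_nonneg a) fun b => ?_)
  simpa [mul_comm ‖a‖] using norm_mul_le b a

end

section

variable {𝕜 A : Type*} [RCLike 𝕜] [NonUnitalNormedRing A] [NormedSpace 𝕜 A]
  [SMulCommClass 𝕜 A A] [IsScalarTower 𝕜 A A]

theorem snd_mem_of_mem_closure [NormedSpace ℝ A] [IsScalarTower ℝ 𝕜 A]
    (τ : TopologicalSpace 𝓜(𝕜, A))
    (hsnd : ∀ (b : A) (g : StrongDual 𝕜 A), Continuous[τ, _] fun μ : 𝓜(𝕜, A) => g (μ.snd b))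
    {I : Submodule 𝕜 A} (hIc : IsClosed (I : Set A)) (hIl : ∀ a, ∀ x ∈ I, a * x ∈ I)
    {μ : 𝓜(𝕜, A)} (hμ : μ ∈ closure[τ] (DoubleCentralizer.coe 𝕜 '' (I : Set A))) (b : A) :
    μ.snd b ∈ I :=
  MapsTo.closure_of_convex_of_continuous_dual (f := fun μ : 𝓜(𝕜, A) => μ.snd b)
    (by rintro _ ⟨c, hc, rfl⟩; exact hIl b c hc) (I.restrictScalars ℝ).convex hIc (hsnd b) hμ

theorem coe_preimage_closure_image_eq [NormedSpace ℝ A] [IsScalarTower ℝ 𝕜 A]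
    (τ : TopologicalSpace 𝓜(𝕜, A))
    (hsnd : ∀ (b : A) (g : StrongDual 𝕜 A), Continuous[τ, _] fun μ : 𝓜(𝕜, A) => g (μ.snd b))
    {ι : Type*} {l : Filter ι} [l.NeBot] {e : ι → A}
    (he : ∀ a, Tendsto (fun i => e i * a) l (𝓝 a))
    {I : Submodule 𝕜 A} (hIc : IsClosed (I : Set A)) (hIl : ∀ a, ∀ x ∈ I, a * x ∈ I) :
    DoubleCentralizer.coe 𝕜 ⁻¹' closure[τ] (DoubleCentralizer.coe 𝕜 '' (I : Set A)) = I :=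
  Subset.antisymm
    (fun a ha => hIc.mem_of_tendsto (he a) <| Eventually.of_forall fun i =>
      snd_mem_of_mem_closure τ hsnd hIc hIl ha (e i))
    (fun a ha => subset_closure ⟨a, ha, rfl⟩)

theorem eq_of_mapClusterPt (τ : TopologicalSpace 𝓜(𝕜, A))
    (hsnd : ∀ (b : A) (g : StrongDual 𝕜 A), Continuous[τ, _] fun μ : 𝓜(𝕜, A) => g (μ.snd b))
    (hfst : ∀ (b : A) (g : StrongDual 𝕜 A), Continuous[τ, _] fun μ : 𝓜(𝕜, A) => g (μ.fst b))
    {ι : Type*} {l : Filter ι} {F : ι → 𝓜(𝕜, A)} {μ m : 𝓜(𝕜, A)}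
    (hμ : @MapClusterPt _ τ _ μ l F)
    (hF_fst : ∀ b, Tendsto (fun i => (F i).fst b) l (𝓝 (m.fst b)))
    (hF_snd : ∀ b, Tendsto (fun i => (F i).snd b) l (𝓝 (m.snd b))) : μ = m := by
  have weakly_eq {h : 𝓜(𝕜, A) → A} (hh : ∀ g : StrongDual 𝕜 A, Continuous[τ, _] fun ν => g (h ν))
      (hlim : Tendsto (h ∘ F) l (𝓝 (h m))) : h μ = h m :=
    (SeparatingDual.eq_iff_forall_dual_eq (R := 𝕜)).2 fun g =>
      hμ.eq_of_tendsto_comp (hh g) ((g.continuous.tendsto _).comp hlim)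
  exact DoubleCentralizer.ext 𝕜 A _ _ <| Prod.ext
    (ContinuousLinearMap.ext fun b => weakly_eq (hfst b) (hF_fst b))
    (ContinuousLinearMap.ext fun b => weakly_eq (hsnd b) (hF_snd b))

theorem mem_closure_coe_image_coe_preimage
    (hA : ∀ x : A, (∀ a : A, x * a = 0) → x = 0)
    {X : Type*} [NormedAddCommGroup X] [NormedSpace 𝕜 X] (Φ : 𝓜(𝕜, A) ≃L[𝕜] StrongDual 𝕜 X)
    (τ : TopologicalSpace 𝓜(𝕜, A))
    (hτ : τ = TopologicalSpace.induced (fun m => StrongDual.toWeakDual (Φ m)) inferInstance)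
    (hsnd : ∀ (b : A) (g : StrongDual 𝕜 A), Continuous[τ, _] fun μ : 𝓜(𝕜, A) => g (μ.snd b))
    (hfst : ∀ (b : A) (g : StrongDual 𝕜 A), Continuous[τ, _] fun μ : 𝓜(𝕜, A) => g (μ.fst b))
    {ι : Type*} {l : Filter ι} [l.NeBot] {e : ι → A} {C : ℝ} (hC : ∀ i, ‖e i‖ ≤ C)
    (hel : ∀ a, Tendsto (fun i => e i * a) l (𝓝 a))
    (her : ∀ a, Tendsto (fun i => a * e i) l (𝓝 a))
    {J : Set 𝓜(𝕜, A)} (hJ : ∀ a : A, ∀ x ∈ J, (a : 𝓜(𝕜, A)) * x ∈ J) {m : 𝓜(𝕜, A)}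
    (hm : m ∈ J) :
    m ∈ closure[τ] (DoubleCentralizer.coe 𝕜 '' (DoubleCentralizer.coe 𝕜 ⁻¹' J)) := by
  set F : ι → 𝓜(𝕜, A) := fun i => (e i : 𝓜(𝕜, A)) * m
  have hF_mem : ∀ i, F i ∈ DoubleCentralizer.coe 𝕜 '' (DoubleCentralizer.coe 𝕜 ⁻¹' J) :=
    fun i => ⟨m.snd (e i), by rw [mem_preimage, ← coe_mul_eq_coe_snd_s18 hA]; exact hJ (e i) m hm,
      (coe_mul_eq_coe_snd_s18 hA (e i) m).symm⟩
  have hF_norm : ∀ i, ‖F i‖ ≤ C * ‖m‖ := fun i => (norm_mul_le _ _).trans <|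
    mul_le_mul_of_nonneg_right ((norm_coe_le (e i)).trans (hC i)) (norm_nonneg m)
  obtain ⟨μ, hμ⟩ := Φ.exists_mapClusterPt_toWeakDual_of_norm_le (l := l) hF_norm
  replace hμ : MapClusterPt μ l F := (IsInducing.mk hτ).mapClusterPt_iff.1 hμ
  obtain rfl : μ = m := eq_of_mapClusterPt τ hsnd hfst hμ (fun b => hel (m.fst b))
    (fun b => (m.snd.continuous.tendsto _).comp (her b))
  exact closure_mono (range_subset_iff.2 hF_mem) (hμ.clusterPt.mem_closure_of_mem _ range_mem_map)

end

end DoubleCentralizer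

variable {A : Type*} [NonUnitalNormedRing A] [NormedSpace ℂ A]
  [SMulCommClass ℂ A A] [IsScalarTower ℂ A A] [CompleteSpace A]

theorem compliant_ideal_correspondence_general
    -- `A` is faithful
    (hfaith : ∀ x : A, ((∀ a : A, a * x = 0) → x = 0) ∧ ((∀ a : A, x * a = 0) → x = 0))
    -- bounded approximate identity
    (bai : ∃ (ι : Type) (l : Filter ι) (e : ι → A) (C : ℝ), l.NeBot ∧ (∀ i, ‖e i‖ ≤ C) ∧
      (∀ a : A, Filter.Tendsto (fun i => e i * a) l (nhds a)) ∧
      (∀ a : A, Filter.Tendsto (fun i => a * e i) l (nhds a)))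
    -- `M(A)` is a dual Banach algebra, with weak* topology `τ`
    (X : Type*) [NormedAddCommGroup X] [NormedSpace ℂ X]
    (Φ : 𝓜(ℂ, A) ≃L[ℂ] StrongDual ℂ X)
    (τ : TopologicalSpace 𝓜(ℂ, A))
    (hτ : τ = TopologicalSpace.induced
      (fun m => StrongDual.toWeakDual (Φ m)) inferInstance)
    -- compliance: `μ ↦ aμ` and `μ ↦ μa` are weak*-to-weak continuous maps `M(A) → A`
    (hcompl : ∀ (a : A) (f : StrongDual ℂ A),
      @Continuous _ _ τ _ (fun μ : 𝓜(ℂ, A) => f (μ.snd a)) ∧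
      @Continuous _ _ τ _ (fun μ : 𝓜(ℂ, A) => f (μ.fst a))) :
    -- the correspondence
    (∀ I : Submodule ℂ A, IsClosed (I : Set A) → (∀ a : A, ∀ x ∈ I, a * x ∈ I) →
      (DoubleCentralizer.coe ℂ : A → 𝓜(ℂ, A)) ⁻¹'
          (@closure _ τ ((DoubleCentralizer.coe ℂ : A → 𝓜(ℂ, A)) '' (I : Set A)))
        = (I : Set A)) ∧
    (∀ J : Submodule ℂ 𝓜(ℂ, A), @IsClosed _ τ (J : Set 𝓜(ℂ, A)) →
      (∀ m : 𝓜(ℂ, A), ∀ x ∈ J, m * x ∈ J) →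
      @closure _ τ ((DoubleCentralizer.coe ℂ : A → 𝓜(ℂ, A)) ''
          ((DoubleCentralizer.coe ℂ : A → 𝓜(ℂ, A)) ⁻¹' (J : Set 𝓜(ℂ, A))))
        = (J : Set 𝓜(ℂ, A))) := by
  obtain ⟨ι, l, e, C, hl, hC, hel, her⟩ := bai
  have hsnd := fun a f => (hcompl a f).1
  have hfst := fun a f => (hcompl a f).2
  refine ⟨fun I hIc hIl => DoubleCentralizer.coe_preimage_closure_image_eq τ hsnd hel hIc hIl,
    fun J hJc hJl => ?_⟩
  exact (closure_minimal (image_preimage_subset _ _) hJc).antisymm fun m hm =>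
    DoubleCentralizer.mem_closure_coe_image_coe_preimage (fun x => (hfaith x).2) Φ τ hτ hsnd hfst
      hC hel her (fun a => hJl a) hm

/-- Let `A` be a compliant Banach algebra (faithful, `M(A) = 𝓜(ℂ, A)` a dual
Banach algebra, and for each `a ∈ A` the maps `μ ↦ μa` and `μ ↦ aμ` from `M(A)` to `A`
weak*-to-weak continuous) with a bounded approximate identity. Then `I ↦ weak*-closure of I` is a
bijection from the closed left ideals of `A` onto the weak*-closed left ideals of `M(A)`, with
inverse `J ↦ A ∩ J`. -/
theorem compliant_ideal_correspondence
    -- `A` is faithful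
    (hfaith : ∀ x : A, ((∀ a : A, a * x = 0) → x = 0) ∧ ((∀ a : A, x * a = 0) → x = 0))
    -- bounded approximate identity
    (bai : ∃ (ι : Type) (l : Filter ι) (e : ι → A) (C : ℝ), l.NeBot ∧ (∀ i, ‖e i‖ ≤ C) ∧
      (∀ a : A, Filter.Tendsto (fun i => e i * a) l (nhds a)) ∧
      (∀ a : A, Filter.Tendsto (fun i => a * e i) l (nhds a)))
    -- `M(A)` is a dual Banach algebra, with weak* topology `τ`
    (X : Type*) [NormedAddCommGroup X] [NormedSpace ℂ X]
    (Φ : 𝓜(ℂ, A) ≃L[ℂ] StrongDual ℂ X)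
    (τ : TopologicalSpace 𝓜(ℂ, A))
    (hτ : τ = TopologicalSpace.induced
      (fun m => StrongDual.toWeakDual (Φ m)) inferInstance)
    (hsep : ∀ m : 𝓜(ℂ, A), @Continuous _ _ τ τ (fun x => m * x) ∧
      @Continuous _ _ τ τ (fun x => x * m))
    -- compliance: `μ ↦ aμ` and `μ ↦ μa` are weak*-to-weak continuous maps `M(A) → A`
    (hcompl : ∀ (a : A) (f : StrongDual ℂ A),
      @Continuous _ _ τ _ (fun μ : 𝓜(ℂ, A) => f (μ.snd a)) ∧
      @Continuous _ _ τ _ (fun μ : 𝓜(ℂ, A) => f (μ.fst a))) :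
    -- the correspondence
    (∀ I : Submodule ℂ A, IsClosed (I : Set A) → (∀ a : A, ∀ x ∈ I, a * x ∈ I) →
      (DoubleCentralizer.coe ℂ : A → 𝓜(ℂ, A)) ⁻¹'
          (@closure _ τ ((DoubleCentralizer.coe ℂ : A → 𝓜(ℂ, A)) '' (I : Set A)))
        = (I : Set A)) ∧
    (∀ J : Submodule ℂ 𝓜(ℂ, A), @IsClosed _ τ (J : Set 𝓜(ℂ, A)) →
      (∀ m : 𝓜(ℂ, A), ∀ x ∈ J, m * x ∈ J) →
      @closure _ τ ((DoubleCentralizer.coe ℂ : A → 𝓜(ℂ, A)) ''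
          ((DoubleCentralizer.coe ℂ : A → 𝓜(ℂ, A)) ⁻¹' (J : Set 𝓜(ℂ, A))))
        = (J : Set 𝓜(ℂ, A))) :=
  compliant_ideal_correspondence_general hfaith bai X Φ τ hτ hcompl
end
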